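/- arXiv:0903.4866 — 2 statements merged into one kernel-verified Lean document; each statement's English description precedes it below -/
import Mathlib

section
/- Let w ∈ T^Q be divided into M contiguous sections. If each letter of T occurs at least F times in each of the M sections of w, and u is a lie string of length j ≤ M, then |{w' : w →^u w'}| ≥ C(M,j)·F^j. -/
/-- `Applies u w w'` : the lie string `u = (a₁,b₁)⋯(a_j,b_j)` can be applied to `w`
to obtain `w'`; that is, there are positions `i₁ < ⋯ < i_j` with `w` carrying letter
`a_ℓ` and `w'` carrying letter `b_ℓ` at position `i_ℓ`, and `w`, `w'` agree elsewhere. -/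
def Applies {t Q : ℕ} (u : List (Fin t × Fin t)) (w w' : Fin Q → Fin t) : Prop :=
  ∃ pos : Fin u.length → Fin Q, StrictMono pos ∧
    (∀ ℓ : Fin u.length, w (pos ℓ) = (u.get ℓ).1 ∧ w' (pos ℓ) = (u.get ℓ).2) ∧
    (∀ p : Fin Q, (∀ ℓ, pos ℓ ≠ p) → w p = w' p)

/-- The section (of `M` contiguous sections of `{0,…,Q-1}`, the first `Q mod M` of
length `⌈Q/M⌉` and the rest of length `⌊Q/M⌋`) containing position `p`. -/
def sectionOf (Q M p : ℕ) : ℕ :=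
  if p < (Q % M) * (Q / M + 1) then p / (Q / M + 1)
  else Q % M + (p - (Q % M) * (Q / M + 1)) / (Q / M)

lemma sectionOf_monotone (Q M : ℕ) : Monotone (sectionOf Q M) := by
  intro p q hpq
  unfold sectionOf
  by_cases hp : p < (Q % M) * (Q / M + 1)
  · by_cases hq : q < (Q % M) * (Q / M + 1)
    · simp only [hp, hq, if_true]
      exact Nat.div_le_div_right hpq
    · simp only [hp, hq, if_true, if_false]
      have h1 : p / (Q / M + 1) < Q % M :=
        (Nat.div_lt_iff_lt_mul (Nat.succ_pos _)).mpr hp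
      exact h1.le.trans (Nat.le_add_right _ _)
  · have hq : ¬ q < (Q % M) * (Q / M + 1) := fun h => hp (lt_of_le_of_lt hpq h)
    simp only [hp, hq, if_false]
    exact Nat.add_le_add_left
      (Nat.div_le_div_right (Nat.sub_le_sub_right hpq ((Q % M) * (Q / M + 1)))) _

/-- if each letter occurs at least `F` times in each of the `M`
sections of `w`, and `u` is a lie string of length `j ≤ M`, then
`|{w' : w →ᵘ w'}| ≥ C(M,j)·F^j`. -/
theorem shadow_lower_sections (t Q M F j : ℕ) (ht : 2 ≤ t) (hM : 0 < M)
    (w : Fin Q → Fin t)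
    (hw : ∀ m < M, ∀ a : Fin t,
      F ≤ Set.ncard {p : Fin Q | sectionOf Q M p = m ∧ w p = a})
    (u : List (Fin t × Fin t)) (hlie : ∀ p ∈ u, p.1 ≠ p.2) (hj : u.length = j)
    (hjM : j ≤ M) :
    Nat.choose M j * F ^ j
      ≤ Set.ncard {w' : Fin Q → Fin t | Applies u w w'} := by
  classical
  subst hj
  -- the sets of candidate positions for lie `ℓ` when section `σ ℓ` is used
  set A : (Fin u.length → Fin M) → Finset (Fin u.length → Fin Q) :=
    fun σ => Fintype.piFinset (fun ℓ =>
      Finset.univ.filter (fun p => sectionOf Q M (p : ℕ) = (σ ℓ : ℕ) ∧ w p = (u.get ℓ).1))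
    with hA
  set S : Finset (Fin u.length → Fin M) := Finset.univ.filter StrictMono with hS
  set D : Finset (Σ _ : Fin u.length → Fin M, Fin u.length → Fin Q) := S.sigma A with hD
  -- basic facts for elements of D
  have hmemD : ∀ x ∈ D, StrictMono x.1 ∧
      ∀ ℓ, sectionOf Q M (x.2 ℓ : ℕ) = (x.1 ℓ : ℕ) ∧ w (x.2 ℓ) = (u.get ℓ).1 := by
    intro x hx
    rw [hD, Finset.mem_sigma] at hx
    obtain ⟨hx1, hx2⟩ := hx
    rw [hS, Finset.mem_filter] at hx1
    rw [hA, Fintype.mem_piFinset] at hx2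
    refine ⟨hx1.2, fun ℓ => ?_⟩
    have := hx2 ℓ
    rw [Finset.mem_filter] at this
    exact this.2
  have hcmono : ∀ x ∈ D, StrictMono x.2 := by
    intro x hx ℓ ℓ' hll
    obtain ⟨hσ, hc⟩ := hmemD x hx
    by_contra hle
    push_neg at hle
    have h1 : sectionOf Q M (x.2 ℓ' : ℕ) ≤ sectionOf Q M (x.2 ℓ : ℕ) :=
      sectionOf_monotone Q M (by exact_mod_cast hle)
    rw [(hc ℓ).1, (hc ℓ').1] at h1
    exact absurd h1 (not_le.mpr (hσ hll))
  -- the map to resulting strings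
  set Φ : (Σ _ : Fin u.length → Fin M, Fin u.length → Fin Q) → (Fin Q → Fin t) :=
    fun x p => if h : ∃ ℓ, x.2 ℓ = p then (u.get (Classical.choose h)).2 else w p with hΦ
  have hΦ_at : ∀ x ∈ D, ∀ ℓ, Φ x (x.2 ℓ) = (u.get ℓ).2 := by
    intro x hx ℓ
    have h : ∃ ℓ', x.2 ℓ' = x.2 ℓ := ⟨ℓ, rfl⟩
    have : Classical.choose h = ℓ := (hcmono x hx).injective (Classical.choose_spec h)
    simp only [hΦ, dif_pos h, this]
  have hΦ_off : ∀ x, ∀ p : Fin Q, (∀ ℓ, x.2 ℓ ≠ p) → Φ x p = w p := by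
    intro x p hp
    simp only [hΦ]
    rw [dif_neg]
    push_neg
    exact hp
  have hΦ_ne : ∀ x ∈ D, ∀ p : Fin Q, Φ x p ≠ w p ↔ ∃ ℓ, x.2 ℓ = p := by
    intro x hx p
    constructor
    · intro h
      by_contra hcon
      push_neg at hcon
      exact h (hΦ_off x p hcon)
    · rintro ⟨ℓ, rfl⟩
      rw [hΦ_at x hx ℓ, (hmemD x hx).2 ℓ |>.2]
      have hne := hlie (u.get ℓ) (by simpa using u.get_mem u ℓ.1 ℓ.2)
      exact fun h => hne h.symm
  -- Φ lands in the target set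
  have hΦ_mem : ∀ x ∈ D, Applies u w (Φ x) := by
    intro x hx
    refine ⟨x.2, hcmono x hx, fun ℓ => ⟨((hmemD x hx).2 ℓ).2, hΦ_at x hx ℓ⟩, fun p hp =>
      (hΦ_off x p hp).symm⟩
  -- Φ is injective on D
  haveI : WellFoundedLT (Fin u.length) := Finite.to_wellFoundedLT
  have hΦ_inj : Set.InjOn Φ (D : Set _) := by
    intro x hx y hy hxy
    simp only [Finset.mem_coe] at hx hy
    have hr : Set.range x.2 = Set.range y.2 := by
      ext p
      simp only [Set.mem_range]
      rw [← hΦ_ne x hx p, ← hΦ_ne y hy p, hxy]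
    have h2 : x.2 = y.2 := ((hcmono x hx).range_inj (hcmono y hy)).mp hr
    have h1 : x.1 = y.1 := by
      funext ℓ
      have ha := ((hmemD x hx).2 ℓ).1
      have hb := ((hmemD y hy).2 ℓ).1
      rw [h2] at ha
      apply Fin.ext
      rw [← ha, ← hb]
    obtain ⟨x1, x2⟩ := x
    obtain ⟨y1, y2⟩ := y
    simp only at h1 h2
    subst h1; subst h2; rfl
  -- lower bound on the cardinality of D
  have hcardS : Nat.choose M u.length ≤ S.card := by
    have := Finset.card_le_card_of_injOn
      (f := fun s : Finset (Fin M) =>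
        if h : s.card = u.length then ((s.orderEmbOfFin h : Fin u.length → Fin M)) else
          fun _ => ⟨0, hM⟩)
      (s := Finset.powersetCard u.length (Finset.univ : Finset (Fin M))) (t := S)
      (by
        intro s hs
        rw [Finset.mem_coe, Finset.mem_powersetCard] at hs
        dsimp only
        rw [dif_pos hs.2, hS, Finset.mem_coe, Finset.mem_filter]
        exact ⟨Finset.mem_univ _, (s.orderEmbOfFin hs.2).strictMono⟩)
      (by
        intro s hs s' hs' hss
        rw [Finset.mem_coe, Finset.mem_powersetCard] at hs hs'
        simp only [dif_pos hs.2, dif_pos hs'.2] at hss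
        have := congrArg (fun f => Set.range f) hss
        simpa [Finset.range_orderEmbOfFin, Finset.coe_inj] using this)
    rwa [Finset.card_powersetCard, Finset.card_univ, Fintype.card_fin] at this
  have hcardA : ∀ σ ∈ S, F ^ u.length ≤ (A σ).card := by
    intro σ _
    rw [hA]
    rw [Fintype.card_piFinset]
    calc F ^ u.length = ∏ ℓ : Fin u.length, F := by
          rw [Finset.prod_const, Finset.card_univ, Fintype.card_fin]
      _ ≤ _ := by
          apply Finset.prod_le_prod (fun _ _ => Nat.zero_le _)
          intro ℓ _
          have := hw (σ ℓ : ℕ) (σ ℓ).2 (u.get ℓ).1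
          have heq : {p : Fin Q | sectionOf Q M (p : ℕ) = (σ ℓ : ℕ) ∧ w p = (u.get ℓ).1} =
              ↑(Finset.univ.filter
                (fun p : Fin Q => sectionOf Q M (p : ℕ) = (σ ℓ : ℕ) ∧ w p = (u.get ℓ).1)) := by
            ext p; simp
          rw [heq, Set.ncard_coe_finset] at this
          exact this
  have hcardD : Nat.choose M u.length * F ^ u.length ≤ D.card := by
    rw [hD, Finset.card_sigma]
    calc Nat.choose M u.length * F ^ u.length ≤ S.card * F ^ u.length :=
          Nat.mul_le_mul_right _ hcardS
      _ = ∑ _σ ∈ S, F ^ u.length := by rw [Finset.sum_const, smul_eq_mul]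
      _ ≤ ∑ σ ∈ S, (A σ).card := Finset.sum_le_sum hcardA
  -- conclude
  calc Nat.choose M u.length * F ^ u.length ≤ D.card := hcardD
    _ = (Φ '' (D : Set _)).ncard := by
        rw [Set.ncard_image_of_injOn hΦ_inj, Set.ncard_coe_finset]
    _ ≤ Set.ncard {w' : Fin Q → Fin t | Applies u w w'} := by
        apply Set.ncard_le_ncard
        · rintro w' ⟨x, hx, rfl⟩
          exact hΦ_mem x hx
        · exact Set.toFinite _
end

section
/- Let t ≥ 2 and let w ∈ T^Q with d(w, s) ≤ k for some (M,r)-balanced s ∈ T^Q, and let u be a lie string of length j. Then |{w' : w →^u w'}| ≤ C(M+j−1, j)·((1/t)⌈Q/M⌉ + r + k)^j. -/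
lemma sectionOf_lt {Q M p : ℕ} (hM : 0 < M) (hp : p < Q) : sectionOf Q M p < M := by
  have hQ : M * (Q / M) + Q % M = Q := Nat.div_add_mod Q M
  have hmod : Q % M < M := Nat.mod_lt Q hM
  unfold sectionOf
  split_ifs with h
  · exact (Nat.div_lt_iff_lt_mul (Nat.succ_pos _)).2 (by linarith)
  · have hd : 0 < Q / M := Nat.pos_of_ne_zero fun h0 => by simp_all
    have : (p - Q % M * (Q / M + 1)) / (Q / M) < M - Q % M := by
      rw [Nat.div_lt_iff_lt_mul hd, Nat.sub_mul]
      have : Q % M * (Q / M) ≤ M * (Q / M) := Nat.mul_le_mul_right _ hmod.le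
      grind
    omega

lemma sectionOf_mono {Q M : ℕ} : Monotone (sectionOf Q M) := by
  intro p q hpq
  unfold sectionOf
  split_ifs with hp hq hq
  · exact Nat.div_le_div_right hpq
  · exact ((Nat.div_lt_iff_lt_mul (Nat.succ_pos _)).2 hp).le.trans (Nat.le_add_right _ _)
  · omega
  · exact Nat.add_le_add_left (Nat.div_le_div_right (Nat.sub_le_sub_right hpq _)) _

/-- Stars and bars: a monotone tuple is determined by the multiset of its values. -/
lemma card_monotone_le_choose (β : Type*) [PartialOrder β] [Fintype β] (n : ℕ) :
    Nat.card {g : Fin n → β // Monotone g} ≤ (Fintype.card β + n - 1).choose n := by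
  classical
  let toSym : {g : Fin n → β // Monotone g} → Sym β n := fun g =>
    ⟨(List.ofFn g.1 : Multiset β), by simp⟩
  have h_inj : Function.Injective toSym := by
    rintro ⟨g₁, hg₁⟩ ⟨g₂, hg₂⟩ h
    have hperm : (List.ofFn g₁).Perm (List.ofFn g₂) :=
      Multiset.coe_eq_coe.1 (congrArg Subtype.val h)
    exact Subtype.ext <| List.ofFn_injective <|
      hperm.eq_of_sortedLE hg₁.sortedLE_ofFn hg₂.sortedLE_ofFn
  calc Nat.card {g : Fin n → β // Monotone g} ≤ Nat.card (Sym β n) :=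
        Nat.card_le_card_of_injective toSym h_inj
    _ = (Fintype.card β + n - 1).choose n := by
        rw [Nat.card_eq_fintype_card, Sym.card_sym_eq_choose]

lemma Set.ncard_univ_pi {ι : Type*} [Fintype ι] {α : ι → Type*} (F : ∀ i, Set (α i)) :
    (Set.univ.pi F).ncard = ∏ i, (F i).ncard := by
  simp only [← Nat.card_coe_set_eq, Nat.card_congr (Equiv.Set.univPi F), Nat.card_pi]

lemma ncard_and_eq_le_add_hammingDist {ι α : Type*} [Fintype ι] [DecidableEq α]
    (P : ι → Prop) (w s : ι → α) (a : α) :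
    {i | P i ∧ w i = a}.ncard ≤ {i | P i ∧ s i = a}.ncard + hammingDist w s := by
  classical
  have hdist : hammingDist w s = {i | w i ≠ s i}.ncard := by
    rw [Set.ncard_eq_toFinset_card', Set.toFinset_ofPred]; rfl
  have hsub : {i | P i ∧ w i = a} ⊆ {i | P i ∧ s i = a} ∪ {i | w i ≠ s i} := by
    rintro i ⟨hP, rfl⟩
    by_cases h : w i = s i
    · exact Or.inl ⟨hP, h.symm⟩
    · exact Or.inr h
  rw [hdist]
  exact (Set.ncard_le_ncard hsub (Set.toFinite _)).trans (Set.ncard_union_le _ _)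

lemma ncard_monotone_tuples_le {ι β : Type*} [Preorder ι] [Fintype ι] [PartialOrder β]
    [Fintype β] {n : ℕ} (σ : ι → β) (hσ : Monotone σ) (P : Fin n → ι → Prop) {B : ℝ}
    (hB₀ : 0 ≤ B) (hB : ∀ b ℓ, ({i | σ i = b ∧ P ℓ i}.ncard : ℝ) ≤ B) :
    ({pos : Fin n → ι | Monotone pos ∧ ∀ ℓ, P ℓ (pos ℓ)}.ncard : ℝ)
      ≤ (Fintype.card β + n - 1).choose n * B ^ n := by
  classical
  let fibre (g : {g : Fin n → β // Monotone g}) : Set (Fin n → ι) :=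
    Set.univ.pi fun ℓ => {i | σ i = g.1 ℓ ∧ P ℓ i}
  have hcover : {pos : Fin n → ι | Monotone pos ∧ ∀ ℓ, P ℓ (pos ℓ)} ⊆ ⋃ g, fibre g :=
    fun pos hpos => Set.mem_iUnion.2
      ⟨⟨σ ∘ pos, hσ.comp hpos.1⟩, fun ℓ _ => ⟨rfl, hpos.2 ℓ⟩⟩
  have hfibre (g) : ((fibre g).ncard : ℝ) ≤ B ^ n := by
    rw [Set.ncard_univ_pi, Nat.cast_prod]
    calc ∏ ℓ, (({i | σ i = g.1 ℓ ∧ P ℓ i}.ncard : ℕ) : ℝ) ≤ ∏ _ℓ : Fin n, B :=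
          Finset.prod_le_prod (fun ℓ _ => Nat.cast_nonneg _) fun ℓ _ => hB (g.1 ℓ) ℓ
      _ = B ^ n := by simp
  have hcount : (Fintype.card {g : Fin n → β // Monotone g} : ℝ)
      ≤ (Fintype.card β + n - 1).choose n := by
    rw [← Nat.card_eq_fintype_card]
    exact_mod_cast card_monotone_le_choose β n
  calc ({pos : Fin n → ι | Monotone pos ∧ ∀ ℓ, P ℓ (pos ℓ)}.ncard : ℝ)
      ≤ (⋃ g, fibre g).ncard := by exact_mod_cast Set.ncard_le_ncard hcover (Set.toFinite _)
    _ ≤ ∑ g, ((fibre g).ncard : ℝ) := by exact_mod_cast Set.ncard_iUnion_le_of_fintype fibre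
    _ ≤ ∑ _g : {g : Fin n → β // Monotone g}, B ^ n := Finset.sum_le_sum fun g _ => hfibre g
    _ ≤ (Fintype.card β + n - 1).choose n * B ^ n := by
        rw [Finset.sum_const, nsmul_eq_mul, Finset.card_univ]
        exact mul_le_mul_of_nonneg_right hcount (by positivity)

lemma ncard_applies_le {t Q : ℕ} (u : List (Fin t × Fin t)) (w : Fin Q → Fin t) :
    {w' | Applies u w w'}.ncard
      ≤ {pos : Fin u.length → Fin Q | StrictMono pos ∧ ∀ ℓ, w (pos ℓ) = (u.get ℓ).1}.ncard := by
  simp only [← Nat.card_coe_set_eq]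
  refine Nat.card_le_card_of_injective
    (fun w' => ⟨w'.2.choose, w'.2.choose_spec.1, fun ℓ => (w'.2.choose_spec.2.1 ℓ).1⟩) ?_
  rintro ⟨w₁, h₁⟩ ⟨w₂, h₂⟩ hpos
  obtain ⟨-, hlie₁, hrest₁⟩ := h₁.choose_spec
  obtain ⟨-, hlie₂, hrest₂⟩ := h₂.choose_spec
  have hpos : h₁.choose = h₂.choose := congrArg Subtype.val hpos
  refine Subtype.ext (funext fun p => show w₁ p = w₂ p from ?_)
  by_cases hp : ∃ ℓ, h₁.choose ℓ = p
  · obtain ⟨ℓ, rfl⟩ := hp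
    rw [(hlie₁ ℓ).2, hpos, (hlie₂ ℓ).2]
  · simp only [not_exists] at hp
    rw [← hrest₁ p hp, hrest₂ p (hpos ▸ hp)]

/-- `(Q + M - 1) / M` is `⌈Q/M⌉` since `M > 0`. -/
theorem shadow_upper_balanced_general (t Q M k j : ℕ) (hM : 0 < M)
    (r : ℝ) (hr : 0 ≤ r) (w s : Fin Q → Fin t)
    (hbal : ∀ m < M, ∀ a : Fin t,
      (Set.ncard {p : Fin Q | sectionOf Q M p = m ∧ s p = a} : ℝ)
        ≤ (((Q + M - 1) / M : ℕ) : ℝ) / t + r)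
    (hd : hammingDist w s ≤ k)
    (u : List (Fin t × Fin t)) (hj : u.length = j) :
    (Set.ncard {w' : Fin Q → Fin t | Applies u w w'} : ℝ)
      ≤ (Nat.choose (M + j - 1) j : ℝ)
          * ((((Q + M - 1) / M : ℕ) : ℝ) / t + r + k) ^ j := by
  subst hj
  let σ : Fin Q → Fin M := fun p => ⟨sectionOf Q M p, sectionOf_lt hM p.2⟩
  have hσ : Monotone σ := fun p q hpq => sectionOf_mono (show (p : ℕ) ≤ q from hpq)
  have hletters (b : Fin M) (ℓ : Fin u.length) :
      ({p | σ p = b ∧ w p = (u.get ℓ).1}.ncard : ℝ)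
        ≤ (((Q + M - 1) / M : ℕ) : ℝ) / t + r + k := by
    have hw := ncard_and_eq_le_add_hammingDist (fun p => σ p = b) w s (u.get ℓ).1
    have hσb : ∀ p, σ p = b ↔ sectionOf Q M p = b := fun p => Fin.ext_iff
    simp only [hσb] at hw ⊢
    have hw' := (Nat.cast_le (α := ℝ)).2 (hw.trans (Nat.add_le_add_left hd _))
    push_cast at hw'
    linarith [hbal b b.2 (u.get ℓ).1]
  have hshadow : {w' | Applies u w w'}.ncard
      ≤ {pos : Fin u.length → Fin Q | Monotone pos ∧ ∀ ℓ, w (pos ℓ) = (u.get ℓ).1}.ncard :=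
    (ncard_applies_le u w).trans <|
      Set.ncard_le_ncard (fun pos h => ⟨h.1.monotone, h.2⟩) (Set.toFinite _)
  refine (Nat.cast_le.2 hshadow).trans ?_
  simpa using ncard_monotone_tuples_le σ hσ (fun ℓ p => w p = (u.get ℓ).1) (by positivity) hletters

/-- if `w` is within Hamming distance `k` of some `(M,r)`-balanced
`s ∈ T^Q` and `u` is a lie string of length `j`, then
`|{w' : w →ᵘ w'}| ≤ C(M+j−1, j)·((1/t)⌈Q/M⌉ + r + k)^j`.
Note `(Q+M-1)/M = ⌈Q/M⌉` for `M > 0`. -/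
theorem shadow_upper_balanced (t Q M k j : ℕ) (ht : 2 ≤ t) (hM : 0 < M)
    (r : ℝ) (hr : 0 ≤ r) (w s : Fin Q → Fin t)
    (hbal : ∀ m < M, ∀ a : Fin t,
      (Set.ncard {p : Fin Q | sectionOf Q M p = m ∧ s p = a} : ℝ)
        ≤ (((Q + M - 1) / M : ℕ) : ℝ) / t + r)
    (hd : hammingDist w s ≤ k)
    (u : List (Fin t × Fin t)) (hlie : ∀ p ∈ u, p.1 ≠ p.2) (hj : u.length = j) :
    (Set.ncard {w' : Fin Q → Fin t | Applies u w w'} : ℝ)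
      ≤ (Nat.choose (M + j - 1) j : ℝ)
          * ((((Q + M - 1) / M : ℕ) : ℝ) / t + r + k) ^ j :=
  shadow_upper_balanced_general t Q M k j hM r hr w s hbal hd u hj
end
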